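/- arXiv:2210.07834 — 5 statements merged into one kernel-verified Lean document; each statement's English description precedes it below -/
import Mathlib

section
/- Let X be a team over a variable set V with values in a set M, and let x, y, z be tuples of variables. If X satisfies the anonymity atom (x++y) Υ (z++y) (where ++ denotes concatenation of tuples), then X satisfies the anonymity atom (x++y) Υ z. (Soundness of the cancellation rule A3.) -/
/-- A team `X` over variables `V` with values in `M` satisfies the anonymity atom `x Υ y`. -/
def Anon {V M : Type*} (X : Set (V → M)) (x y : List V) : Prop :=
  ∀ s ∈ X, ∃ s' ∈ X, (∀ v ∈ x, s v = s' v) ∧ ∃ v ∈ y, s v ≠ s' v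

/-- Soundness of the cancellation rule A3. -/
theorem anon_cancel {V M : Type*} (X : Set (V → M)) (x y z : List V)
    (h : Anon X (x ++ y) (z ++ y)) : Anon X (x ++ y) z := by
  intro s hs
  obtain ⟨s', hs', hagree, v, hv, hne⟩ := h s hs
  refine ⟨s', hs', hagree, v, ?_, hne⟩
  rcases List.mem_append.mp hv with h1 | h2
  · exact h1
  · exact absurd (hagree v (List.mem_append.mpr (Or.inr h2))) hne
end

section
/- For any team X over a variable set V with values in a set M and tuples of variables x = (x_1,...,x_n) and y = (y_1,...,y_m), the following are equivalent: (1) X satisfies the anonymity atom x Υ y; (2) there exists a function h assigning to each s ∈ X an m-tuple h(s) ∈ M^m such that for every s ∈ X, h(s) ≠ (s(y_1),...,s(y_m)) and there exists s' ∈ X with s'(x_i) = s(x_i) for all i and (s'(y_1),...,s'(y_m)) = h(s). (This expresses the definability of the anonymity atom by the inclusion-logic formula ∃u(¬u=y ∧ xu ⊆ xy).) -/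
/-- Definability of the anonymity atom by the inclusion-logic formula
`∃u (¬ u = y ∧ x u ⊆ x y)`: `X` satisfies `x Υ y` iff there is a function `h`
assigning to each `s ∈ X` an `m`-tuple `h s ∈ M^m` with `h s ≠ s(y)` which is
realized as `s'(y)` for some `s' ∈ X` agreeing with `s` on `x`. -/
theorem anon_iff_inclusion {V M : Type*} (X : Set (V → M)) (x y : List V) :
    Anon X x y ↔
      ∃ h : (V → M) → List M, ∀ s ∈ X,
        (h s).length = y.length ∧ h s ≠ y.map s ∧
        ∃ s' ∈ X, (∀ v ∈ x, s' v = s v) ∧ y.map s' = h s := by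
  constructor
  · intro hA
    classical
    choose! s' hs'X hagree hdiff using hA
    refine ⟨fun s => y.map (s' s), fun s hs => ?_⟩
    refine ⟨by simp, ?_, s' s, hs'X s hs, fun v hv => (hagree s hs v hv).symm, rfl⟩
    intro heq
    obtain ⟨v, hv, hne⟩ := hdiff s hs
    exact hne ((List.map_inj_left.mp heq v hv).symm)
  · rintro ⟨h, hh⟩ s hs
    obtain ⟨-, hne, s', hs'X, hagree, heq⟩ := hh s hs
    refine ⟨s', hs'X, fun v hv => (hagree v hv).symm, ?_⟩
    by_contra hall
    push_neg at hall
    exact hne (heq ▸ (List.map_inj_left.mpr fun v hv => (hall v hv).symm) ▸ rfl)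
end

section
/- Soundness of the anonymity axioms: if an anonymity atom x Υ y is derivable from a set Σ of anonymity atoms using rules A1–A4, then for every set M and every team X over the variables with values in M, if X satisfies every atom in Σ then X satisfies x Υ y. -/
/-- Derivability of anonymity atoms from a set `Sig` of anonymity atoms by rules A1–A4. -/
inductive Derives {V : Type*} (Sig : Set (List V × List V)) : List V → List V → Prop
  | mem {x y : List V} : (x, y) ∈ Sig → Derives Sig x y
  /-- A1 (permutation) -/
  | perm {x y x' y' : List V} :
      Derives Sig x y → x.Perm x' → y.Perm y' → Derives Sig x' y'
  /-- A2 (monotonicity) -/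
  | mono {x y z u : List V} : Derives Sig (x ++ y) z → Derives Sig x (z ++ u)
  /-- A3 (cancellation) -/
  | cancel {x y z : List V} : Derives Sig (x ++ y) (z ++ y) → Derives Sig (x ++ y) z
  /-- A4 -/
  | bot {x x' y' : List V} : Derives Sig x [] → Derives Sig x' y'

namespace Anon

variable {V M : Type*} {X : Set (V → M)}

theorem mono {x x' y y' : List V} (h : Anon X x y) (hx : x' ⊆ x) (hy : y ⊆ y') :
    Anon X x' y' := by
  intro s hs
  obtain ⟨s', hs', hagree, v, hv, hne⟩ := h s hs
  exact ⟨s', hs', fun w hw => hagree w (hx hw), v, hy hv, hne⟩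

theorem cancel {x y z : List V} (h : Anon X x (z ++ y)) (hy : y ⊆ x) : Anon X x z := by
  intro s hs
  obtain ⟨s', hs', hagree, v, hv, hne⟩ := h s hs
  refine ⟨s', hs', hagree, v, ?_, hne⟩
  rcases List.mem_append.mp hv with hvz | hvy
  · exact hvz
  · exact absurd (hagree v (hy hvy)) hne

theorem eq_empty_of_nil {x : List V} (h : Anon X x []) : X = ∅ :=
  Set.eq_empty_of_forall_notMem fun s hs => by simpa using h s hs

theorem of_eq_empty (hX : X = ∅) (x y : List V) : Anon X x y := by
  simp [Anon, hX]

end Anon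

/-- Soundness of the anonymity axioms A1–A4. -/
theorem derives_sound {V : Type*} (Sig : Set (List V × List V)) (x y : List V)
    (h : Derives Sig x y) :
    ∀ (M : Type) (X : Set (V → M)), (∀ p ∈ Sig, Anon X p.1 p.2) → Anon X x y := by
  intro M X hSig
  induction h with
  | mem hmem => exact hSig _ hmem
  | perm _ hx hy ih => exact ih.mono hx.symm.subset hy.subset
  | mono _ ih => exact ih.mono (List.subset_append_left _ _) (List.subset_append_left _ _)
  | cancel _ ih => exact ih.cancel (List.subset_append_right _ _)
  | bot _ ih => exact Anon.of_eq_empty ih.eq_empty_of_nil _ _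
end

section
/- Key construction in the completeness proof: let W be a set of variables, let x = (x_1,...,x_n) and y = (y_1,...,y_m) be tuples of distinct variables from W with the variables of x disjoint from those of y and m ≥ 1. Define the team X = { s : W → {0,1,2} : (∃ i ≤ n, s(x_i) ≠ 0) ∨ (∀ j ≤ m, s(y_j) = 0) }. Then: (a) X does not satisfy the anonymity atom x Υ y; and (b) for any tuples u and v of variables from W with the variables of u disjoint from those of v, v nonempty, and NOT (every variable of x occurs in u and every variable of v occurs in y), the team X satisfies the anonymity atom u Υ v. -/
/-- Key construction in the completeness proof: the team
`X = { s : W → {0,1,2} | (∃ i, s xᵢ ≠ 0) ∨ (∀ j, s yⱼ = 0) }`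
(a) fails `x Υ y`, and (b) satisfies every atom `u Υ v` with `u` disjoint from `v`,
`v` nonempty, unless all variables of `x` occur in `u` and all variables of `v` occur
in `y`. -/
theorem completeness_construction {W : Type*} (x y : List W)
    (hx : x.Nodup) (hy : y.Nodup) (hdisj : ∀ a ∈ x, a ∉ y) (hm : y ≠ []) :
    ¬ Anon {s : W → Fin 3 | (∃ a ∈ x, s a ≠ 0) ∨ (∀ a ∈ y, s a = 0)} x y ∧
    ∀ u v : List W, (∀ a ∈ u, a ∉ v) → v ≠ [] →
      ¬ ((∀ a ∈ x, a ∈ u) ∧ (∀ a ∈ v, a ∈ y)) →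
      Anon {s : W → Fin 3 | (∃ a ∈ x, s a ≠ 0) ∨ (∀ a ∈ y, s a = 0)} u v := by
  classical
  constructor
  · intro h
    obtain ⟨s', hs', hagree, b, hb, hne⟩ := h (fun _ => 0) (Or.inr fun a _ => rfl)
    rcases hs' with ⟨a, ha, hne0⟩ | hall
    · exact hne0 (hagree a ha).symm
    · exact hne (hall b hb).symm
  · intro u v hdisjuv hvne hnot s hs
    by_cases hv : ∀ a ∈ v, a ∈ y
    · have hxu : ∃ a ∈ x, a ∉ u := by
        by_contra h; push_neg at h; exact hnot ⟨h, hv⟩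
      obtain ⟨a₀, ha₀x, ha₀u⟩ := hxu
      obtain ⟨b, hbv⟩ := List.exists_mem_of_ne_nil v hvne
      have hby := hv b hbv
      have hab : a₀ ≠ b := fun h => hdisj a₀ ha₀x (h ▸ hby)
      refine ⟨Function.update (Function.update s b (if s b = 0 then 1 else 0)) a₀ 1,
        Or.inl ⟨a₀, ha₀x, by simp⟩, ?_, b, hbv, ?_⟩
      · intro w hw
        have h1 : w ≠ a₀ := fun h => ha₀u (h ▸ hw)
        have h2 : w ≠ b := fun h => hdisjuv w hw (h ▸ hbv)
        simp [Function.update_of_ne h1, Function.update_of_ne h2]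
      · rw [Function.update_of_ne (Ne.symm hab), Function.update_self]
        split_ifs with h
        · simp [h]
        · exact h
    · push_neg at hv
      obtain ⟨b, hbv, hbny⟩ := hv
      refine ⟨Function.update s b (if s b = 1 then 2 else 1), ?_, ?_, b, hbv, ?_⟩
      · rcases hs with ⟨a, hax, hane⟩ | hall
        · by_cases hab : a = b
          · subst hab
            refine Or.inl ⟨a, hax, ?_⟩
            rw [Function.update_self]; split_ifs <;> simp
          · exact Or.inl ⟨a, hax, by rwa [Function.update_of_ne hab]⟩
        · refine Or.inr fun a hay => ?_
          have : a ≠ b := fun h => hbny (h ▸ hay)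
          rw [Function.update_of_ne this]; exact hall a hay
      · intro w hw
        have : w ≠ b := fun h => hdisjuv w hw (h ▸ hbv)
        rw [Function.update_of_ne this]
      · rw [Function.update_self]
        split_ifs with h
        · simp [h]
        · exact h
end

section
/- Soundness of the multiplication rule A5: let X be a team over a variable set V with values in a set M, let x be a tuple of variables, let y_1, ..., y_n be tuples of variables, and let k_1, ..., k_n be natural numbers ≥ 1. If X satisfies the k_1-anonymity atom x Υ_{k_1} y_1 and, for each i with 2 ≤ i ≤ n, X satisfies the k_i-anonymity atom (x++y_1++...++y_{i-1}) Υ_{k_i} y_i, then X satisfies the (k_1·k_2·...·k_n)-anonymity atom x Υ_{k_1·...·k_n} (y_1++...++y_n). -/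
/-- A team `X` satisfies the `k`-anonymity atom `x Υ_k y`: for every `s ∈ X`, the set of
`y`-tuples of members of `X` agreeing with `s` on `x` has at least `k` elements. -/
def AnonK {V M : Type*} (X : Set (V → M)) (x y : List V) (k : ℕ) : Prop :=
  ∀ s ∈ X, ∃ T : Finset (List M), k ≤ T.card ∧
    ↑T ⊆ {t : List M | ∃ s' ∈ X, (∀ v ∈ x, s' v = s v) ∧ t = y.map s'}

/-- Soundness of the multiplication rule A5: if `x Υ_{k₁} y₁` and
`(x ++ y₁ ++ ⋯ ++ yᵢ₋₁) Υ_{kᵢ} yᵢ` for each `i`, then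
`x Υ_{k₁ ⋯ kₙ} (y₁ ⋯ ++ yₙ)`. -/
theorem anonK_mul {V M : Type*} (X : Set (V → M)) (x : List V)
    (ys : List (List V)) (ks : List ℕ) (hlen : ys.length = ks.length)
    (hk : ∀ k ∈ ks, 1 ≤ k)
    (h : ∀ (i : ℕ) (hi : i < ys.length),
      AnonK X (x ++ (ys.take i).flatten) ys[i] (ks[i]'(hlen ▸ hi))) :
    AnonK X x ys.flatten ks.prod := by
  classical
  induction ys generalizing x ks with
  | nil =>
    obtain rfl : ks = [] := List.length_eq_zero_iff.mp hlen.symm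
    intro s hs
    refine ⟨{[]}, by simp, ?_⟩
    intro t ht
    simp only [Finset.coe_singleton, Set.mem_singleton_iff] at ht
    subst ht
    exact ⟨s, hs, fun v _ => rfl, rfl⟩
  | cons y ys ih =>
    obtain ⟨k, ks, rfl⟩ : ∃ k ks', ks = k :: ks' := by
      cases ks with
      | nil => simp at hlen
      | cons k ks => exact ⟨k, ks, rfl⟩
    intro s hs
    have h0 : AnonK X x y k := by
      have := h 0 (by simp)
      simpa using this
    obtain ⟨T, hTcard, hTsub⟩ := h0 s hs
    have ih' : ∀ t ∈ T, ∃ T' : Finset (List M), ks.prod ≤ T'.card ∧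
        ∀ u ∈ T', ∃ s'' ∈ X, (∀ v ∈ x, s'' v = s v) ∧
          t ++ u = (y ++ ys.flatten).map s'' := by
      intro t ht
      obtain ⟨s', hs', hagree, rfl⟩ := hTsub ht
      have hIH : AnonK X (x ++ y) ys.flatten ks.prod := by
        refine ih (x ++ y) ks (by simpa using hlen) (fun k hk' => hk k (by simp [hk']))
          (fun i hi => ?_)
        have := h (i + 1) (by simpa using Nat.succ_lt_succ hi)
        simpa [List.append_assoc] using this
      obtain ⟨T', hT'card, hT'sub⟩ := hIH s' hs'
      refine ⟨T', hT'card, fun u hu => ?_⟩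
      obtain ⟨s'', hs'', hagree'', rfl⟩ := hT'sub hu
      refine ⟨s'', hs'', fun v hv => ?_, ?_⟩
      · rw [hagree'' v (by simp [hv]), hagree v hv]
      · have hy : y.map s'' = y.map s' := by
          apply List.map_congr_left
          intro v hv
          exact hagree'' v (by simp [hv])
        simp [hy]
    choose F hF1 hF2 using ih'
    have hTlen : ∀ t ∈ T, t.length = y.length := by
      intro t ht
      obtain ⟨s', _, _, rfl⟩ := hTsub ht
      simp
    refine ⟨T.attach.biUnion (fun t => (F t.1 t.2).image (fun u => t.1 ++ u)), ?_, ?_⟩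
    · rw [Finset.card_biUnion]
      · calc k * ks.prod ≤ T.card * ks.prod :=
              Nat.mul_le_mul_right _ hTcard
          _ = ∑ t ∈ T.attach, ks.prod := by
              rw [Finset.sum_const, Finset.card_attach, smul_eq_mul]
          _ ≤ ∑ t ∈ T.attach, ((F t.1 t.2).image (fun u => t.1 ++ u)).card := by
              refine Finset.sum_le_sum fun t _ => ?_
              rw [Finset.card_image_of_injective _ (fun a b hab => by
                exact List.append_cancel_left hab)]
              exact hF1 t.1 t.2
      · intro t1 _ t2 _ hne
        simp only [Finset.disjoint_left, Finset.mem_image]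
        rintro a ⟨u1, _, rfl⟩ ⟨u2, _, heq⟩
        apply hne
        have hlen12 : t2.1.length = t1.1.length := by
          rw [hTlen t1.1 t1.2, hTlen t2.1 t2.2]
        have : t2.1 = t1.1 := by
          have h2 := congrArg (List.take t2.1.length) heq
          rw [List.take_left, hlen12, List.take_left] at h2
          exact h2
        exact Subtype.ext this.symm
    · intro a ha
      simp only [Finset.coe_biUnion, Set.mem_iUnion, Finset.mem_coe,
        Finset.mem_image] at ha
      obtain ⟨t, ht, u, hu, rfl⟩ := ha
      obtain ⟨s'', hs'', hagree, heq⟩ := hF2 t.1 t.2 u hu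
      exact ⟨s'', hs'', hagree, by simpa using heq⟩
end
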